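/- Let K, d, N, M be positive integers, W ∈ ℝ^{K×d} a weight matrix with row vectors W_k ∈ ℝ^d, and b ∈ ℝ^K a bias vector. Let f_l : Fin N → ℝ^d and f_ul : Fin M → ℝ^d be feature vectors with true labels y_l : Fin N → Fin K and y_ul : Fin M → Fin K; define logits z_l(i) = W·f_l(i) + b and z_ul(i) = W·f_ul(i) + b, and let h_l : Fin N → Fin K and h_ul : Fin M → Fin K be argmax selectors with z_l(i)_{h_l(i)} = max_k z_l(i)_k and z_ul(i)_{h_ul(i)} = max_k z_ul(i)_k. Define the hard-max surrogate loss ℓ̃(v, y) = max_k v_k − v_y and the empirical risks R̃_l = (1/N)·∑_i ℓ̃(z_l(i), y_l(i)) and R̃_ul = (1/M)·∑_i ℓ̃(z_ul(i), y_ul(i)). Then |R̃_ul − R̃_l| ≤ ∑_{k=1}^{K} [ ∑_{j=1}^{d} |W_{k,j}|·|( (1/N)·∑_i 𝟙[y_l(i)=k]·f_l(i) − (1/M)·∑_i 𝟙[y_ul(i)=k]·f_ul(i) )_j| + |b_k|·|(1/N)·∑_i 𝟙[y_l(i)=k] − (1/M)·∑_i 𝟙[y_ul(i)=k]| + ∑_{j=1}^{d}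 |W_{k,j}|·|( (1/N)·∑_i 𝟙[h_l(i)=k]·f_l(i) − (1/M)·∑_i 𝟙[h_ul(i)=k]·f_ul(i) )_j| + |b_k|·|(1/N)·∑_i 𝟙[h_l(i)=k] − (1/M)·∑_i 𝟙[h_ul(i)=k]| ]. -/

import Mathlib

/-!
Once the argmax hypotheses turn the hard-max into the logit of the predicted label, each
empirical risk is the difference of two sample means of logits read off at labels. Logits are
affine in the features, so such a mean is `∑ₖ ⟨W_k, m_k⟩ + b_k p_k`, where `m_k` and `p_k` are the
per-class mean feature and label frequency. The risk gap splits into a true-label part and a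
predicted-label part, and the triangle inequality bounds each part class by class.
-/

open Finset

section ClassStatistics

variable {ι ι' κ δ : Type*} [Fintype ι] [Fintype ι'] [Fintype κ] [Fintype δ] [DecidableEq κ]

/-- `classMean (1 / n) g f k` is the sum of the features of class `k`, normalized by the size
`n` of the whole sample. -/
def classMean (c : ℝ) (g : ι → κ) (f : ι → δ → ℝ) (k : κ) (j : δ) : ℝ :=
  c * ∑ i, (if g i = k then (1 : ℝ) else 0) * f i j

def classFreq (c : ℝ) (g : ι → κ) (k : κ) : ℝ :=
  c * ∑ i, if g i = k then (1 : ℝ) else 0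

lemma sum_apply_label_eq_sum_class (z : ι → κ → ℝ) (g : ι → κ) :
    ∑ i, z i (g i) = ∑ k, ∑ i, (if g i = k then (1 : ℝ) else 0) * z i k := by
  rw [sum_comm]
  simp only [boole_mul, sum_ite_eq, mem_univ, if_true]

lemma mul_sum_affine_apply_label (W : κ → δ → ℝ) (b : κ → ℝ) (f : ι → δ → ℝ)
    (z : ι → κ → ℝ) (hz : ∀ i k, z i k = (∑ j, W k j * f i j) + b k) (g : ι → κ) (c : ℝ) :
    c * ∑ i, z i (g i) = ∑ k, ((∑ j, W k j * classMean c g f k j) + b k * classFreq c g k) := by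
  rw [sum_apply_label_eq_sum_class z g]
  simp only [hz, classMean, classFreq, mul_sum, mul_add, sum_add_distrib]
  congr 1
  · refine sum_congr rfl fun k _ => ?_
    rw [sum_comm]
    exact sum_congr rfl fun j _ => sum_congr rfl fun i _ => by ring
  · exact sum_congr rfl fun k _ => sum_congr rfl fun i _ => by ring

lemma abs_affine_sub_affine_le (w a a' : δ → ℝ) (β t t' : ℝ) :
    |((∑ j, w j * a j) + β * t) - ((∑ j, w j * a' j) + β * t')| ≤
      (∑ j, |w j| * |a j - a' j|) + |β| * |t - t'| := by
  have hsplit : ((∑ j, w j * a j) + β * t) - ((∑ j, w j * a' j) + β * t') =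
      (∑ j, w j * (a j - a' j)) + β * (t - t') := by
    simp only [mul_sub, sum_sub_distrib]
    ring
  rw [hsplit]
  refine (abs_add_le _ _).trans (add_le_add ?_ (abs_mul _ _).le)
  exact (abs_sum_le_sum_abs _ _).trans_eq (sum_congr rfl fun j _ => abs_mul _ _)

lemma abs_mean_logit_sub_le (W : κ → δ → ℝ) (b : κ → ℝ)
    (f : ι → δ → ℝ) (f' : ι' → δ → ℝ) (z : ι → κ → ℝ) (z' : ι' → κ → ℝ)
    (hz : ∀ i k, z i k = (∑ j, W k j * f i j) + b k)
    (hz' : ∀ i k, z' i k = (∑ j, W k j * f' i j) + b k)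
    (g : ι → κ) (g' : ι' → κ) (c c' : ℝ) :
    |c * ∑ i, z i (g i) - c' * ∑ i, z' i (g' i)| ≤
      ∑ k, ((∑ j, |W k j| * |classMean c g f k j - classMean c' g' f' k j|) +
        |b k| * |classFreq c g k - classFreq c' g' k|) := by
  rw [mul_sum_affine_apply_label W b f z hz, mul_sum_affine_apply_label W b f' z' hz',
    ← sum_sub_distrib]
  exact (abs_sum_le_sum_abs _ _).trans
    (sum_le_sum fun k _ => abs_affine_sub_affine_le _ _ _ _ _ _)

end ClassStatistics

theorem generalization_gap_bound_general
    (K d N M : ℕ) (hK : 0 < K)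
    (W : Fin K → Fin d → ℝ) (b : Fin K → ℝ)
    (fl : Fin N → Fin d → ℝ) (ful : Fin M → Fin d → ℝ)
    (yl : Fin N → Fin K) (yul : Fin M → Fin K)
    (zl : Fin N → Fin K → ℝ) (zul : Fin M → Fin K → ℝ)
    (hzl : ∀ i k, zl i k = (∑ j : Fin d, W k j * fl i j) + b k)
    (hzul : ∀ i k, zul i k = (∑ j : Fin d, W k j * ful i j) + b k)
    (hl : Fin N → Fin K) (hul : Fin M → Fin K)
    (hargl : ∀ i, zl i (hl i) =
      Finset.univ.sup' (Finset.univ_nonempty_iff.mpr (Fin.pos_iff_nonempty.mp hK)) (zl i))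
    (hargul : ∀ i, zul i (hul i) =
      Finset.univ.sup' (Finset.univ_nonempty_iff.mpr (Fin.pos_iff_nonempty.mp hK)) (zul i)) :
    |((1 : ℝ) / M) * ∑ i : Fin M,
        (Finset.univ.sup' (Finset.univ_nonempty_iff.mpr (Fin.pos_iff_nonempty.mp hK)) (zul i) -
          zul i (yul i)) -
      ((1 : ℝ) / N) * ∑ i : Fin N,
        (Finset.univ.sup' (Finset.univ_nonempty_iff.mpr (Fin.pos_iff_nonempty.mp hK)) (zl i) -
          zl i (yl i))| ≤
    ∑ k : Fin K,
      ((∑ j : Fin d, |W k j| *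
          |((1 : ℝ) / N) * ∑ i : Fin N, (if yl i = k then (1 : ℝ) else 0) * fl i j -
           ((1 : ℝ) / M) * ∑ i : Fin M, (if yul i = k then (1 : ℝ) else 0) * ful i j|) +
       |b k| * |((1 : ℝ) / N) * ∑ i : Fin N, (if yl i = k then (1 : ℝ) else 0) -
                ((1 : ℝ) / M) * ∑ i : Fin M, (if yul i = k then (1 : ℝ) else 0)| +
       (∑ j : Fin d, |W k j| *
          |((1 : ℝ) / N) * ∑ i : Fin N, (if hl i = k then (1 : ℝ) else 0) * fl i j -
           ((1 : ℝ) / M) * ∑ i : Fin M, (if hul i = k then (1 : ℝ) else 0) * ful i j|) +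
       |b k| * |((1 : ℝ) / N) * ∑ i : Fin N, (if hl i = k then (1 : ℝ) else 0) -
                ((1 : ℝ) / M) * ∑ i : Fin M, (if hul i = k then (1 : ℝ) else 0)|) := by
  simp only [← hargl, ← hargul, sum_sub_distrib, mul_sub]
  set cl : ℝ := 1 / N
  set cul : ℝ := 1 / M
  calc _ = |(cl * ∑ i, zl i (yl i) - cul * ∑ i, zul i (yul i)) -
        (cl * ∑ i, zl i (hl i) - cul * ∑ i, zul i (hul i))| := by ring_nf
    _ ≤ |cl * ∑ i, zl i (yl i) - cul * ∑ i, zul i (yul i)| +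
        |cl * ∑ i, zl i (hl i) - cul * ∑ i, zul i (hul i)| := abs_sub _ _
    _ ≤ _ := (add_le_add (abs_mean_logit_sub_le W b fl ful zl zul hzl hzul yl yul cl cul)
        (abs_mean_logit_sub_le W b fl ful zl zul hzl hzul hl hul cl cul)).trans_eq
          (by rw [← sum_add_distrib]; simp only [classMean, classFreq, add_assoc])

/-- Theorem 1 (exact hard-max form): the gap between the hard-max surrogate empirical
risks on the unlabeled and labeled sets is bounded by per-class misalignments of mean
features (weighted by `|W_k|`) and label frequencies (weighted by `|b_k|`), computed with
the true labels and with the predicted (argmax) labels. -/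
theorem generalization_gap_bound
    (K d N M : ℕ) (hK : 0 < K) (hd : 0 < d) (hN : 0 < N) (hM : 0 < M)
    (W : Fin K → Fin d → ℝ) (b : Fin K → ℝ)
    (fl : Fin N → Fin d → ℝ) (ful : Fin M → Fin d → ℝ)
    (yl : Fin N → Fin K) (yul : Fin M → Fin K)
    (zl : Fin N → Fin K → ℝ) (zul : Fin M → Fin K → ℝ)
    (hzl : ∀ i k, zl i k = (∑ j : Fin d, W k j * fl i j) + b k)
    (hzul : ∀ i k, zul i k = (∑ j : Fin d, W k j * ful i j) + b k)
    (hl : Fin N → Fin K) (hul : Fin M → Fin K)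
    (hargl : ∀ i, zl i (hl i) =
      Finset.univ.sup' (Finset.univ_nonempty_iff.mpr (Fin.pos_iff_nonempty.mp hK)) (zl i))
    (hargul : ∀ i, zul i (hul i) =
      Finset.univ.sup' (Finset.univ_nonempty_iff.mpr (Fin.pos_iff_nonempty.mp hK)) (zul i)) :
    |((1 : ℝ) / M) * ∑ i : Fin M,
        (Finset.univ.sup' (Finset.univ_nonempty_iff.mpr (Fin.pos_iff_nonempty.mp hK)) (zul i) -
          zul i (yul i)) -
      ((1 : ℝ) / N) * ∑ i : Fin N,
        (Finset.univ.sup' (Finset.univ_nonempty_iff.mpr (Fin.pos_iff_nonempty.mp hK)) (zl i) -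
          zl i (yl i))| ≤
    ∑ k : Fin K,
      ((∑ j : Fin d, |W k j| *
          |((1 : ℝ) / N) * ∑ i : Fin N, (if yl i = k then (1 : ℝ) else 0) * fl i j -
           ((1 : ℝ) / M) * ∑ i : Fin M, (if yul i = k then (1 : ℝ) else 0) * ful i j|) +
       |b k| * |((1 : ℝ) / N) * ∑ i : Fin N, (if yl i = k then (1 : ℝ) else 0) -
                ((1 : ℝ) / M) * ∑ i : Fin M, (if yul i = k then (1 : ℝ) else 0)| +
       (∑ j : Fin d, |W k j| *
          |((1 : ℝ) / N) * ∑ i : Fin N, (if hl i = k then (1 : ℝ) else 0) * fl i j -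
           ((1 : ℝ) / M) * ∑ i : Fin M, (if hul i = k then (1 : ℝ) else 0) * ful i j|) +
       |b k| * |((1 : ℝ) / N) * ∑ i : Fin N, (if hl i = k then (1 : ℝ) else 0) -
                ((1 : ℝ) / M) * ∑ i : Fin M, (if hul i = k then (1 : ℝ) else 0)|) :=
  generalization_gap_bound_general K d N M hK W b fl ful yl yul zl zul hzl hzul hl hul hargl hargul
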